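/- Fix a type X with decidable equality, m : ℕ, a finite set U : Finset X, and sets S : Fin m → Finset X with S i ⊆ U for every i. Let b : X with b ∉ U, and let T be a membership decision tree such that eval T e = in for every e ∈ U and eval T b = out. Then U equals the union of the sets S i over the indices i such that the predicate fun x => decide (x ∈ S i) appears in T. Consequently, there exists J ⊆ Fin m with J.card at most the number of internal nodes of T and ⋃_{i ∈ J} S i = U. -/
import Mathlib


/-- A decision tree: either a leaf with a label, or an internal node with a predicate,
a false-subtree and a true-subtree. -/
inductive DTree (X Y : Type*) where
  | leaf (y : Y) : DTree X Y
  | node (p : X → Bool) (f t : DTree X Y) : DTree X Y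

namespace DTree

variable {X Y : Type*}

/-- Evaluation of a decision tree on an input. -/
def eval : DTree X Y → X → Y
  | leaf y, _ => y
  | node p f t, x => if p x then t.eval x else f.eval x

/-- Size of a decision tree: the number of internal nodes. -/
def size : DTree X Y → ℕ
  | leaf _ => 0
  | node _ f t => f.size + t.size + 1

/-- A predicate appears in a tree if it labels some internal node. -/
def appears (p : X → Bool) : DTree X Y → Prop
  | leaf _ => False
  | node q f t => p = q ∨ f.appears p ∨ t.appears p

end DTree

/-- The two-element type of labels `{in, out}`. -/
inductive Lab where
  | inn : Lab
  | out : Lab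
deriving DecidableEq

/-- A membership decision tree: every internal-node predicate is
`fun x => decide (x ∈ S i)` for some `i : Fin m`. -/
def IsMemTree {X : Type*} [DecidableEq X] {m : ℕ} (S : Fin m → Finset X) :
    DTree X Lab → Prop
  | DTree.leaf _ => True
  | DTree.node p f t =>
      (∃ i : Fin m, p = fun x => decide (x ∈ S i)) ∧ IsMemTree S f ∧ IsMemTree S t

theorem DTree.eval_eq_of_agree {X Y : Type*} (T : DTree X Y) (x y : X)
    (h : ∀ p, T.appears p → p x = p y) : T.eval x = T.eval y := by
  induction T with
  | leaf _ => rfl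
  | node p f t ihf iht =>
      have hp : p x = p y := h p (Or.inl rfl)
      simp only [DTree.eval, hp]
      split
      · exact iht fun q hq => h q (Or.inr (Or.inr hq))
      · exact ihf fun q hq => h q (Or.inr (Or.inl hq))

theorem exists_cover_set {X : Type*} [DecidableEq X] {m : ℕ} (S : Fin m → Finset X)
    (T : DTree X Lab) (hT : IsMemTree S T) :
    ∃ J : Finset (Fin m), J.card ≤ T.size ∧
      ∀ p, T.appears p → ∃ i ∈ J, p = fun x => decide (x ∈ S i) := by
  induction T with
  | leaf _ => exact ⟨∅, by simp [DTree.size], fun p hp => hp.elim⟩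
  | node p f t ihf iht =>
      obtain ⟨⟨i, hi⟩, hf, ht⟩ := hT
      obtain ⟨Jf, hJf, hcf⟩ := ihf hf
      obtain ⟨Jt, hJt, hct⟩ := iht ht
      refine ⟨insert i (Jf ∪ Jt), ?_, ?_⟩
      · calc (insert i (Jf ∪ Jt)).card ≤ (Jf ∪ Jt).card + 1 := Finset.card_insert_le _ _
          _ ≤ (Jf.card + Jt.card) + 1 := by
              exact Nat.add_le_add_right (Finset.card_union_le _ _) 1
          _ ≤ _ := by simp only [DTree.size]; omega
      · rintro q (rfl | hq | hq)
        · exact ⟨i, Finset.mem_insert_self _ _, hi⟩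
        · obtain ⟨j, hj, hjq⟩ := hcf q hq
          exact ⟨j, Finset.mem_insert_of_mem (Finset.mem_union_left _ hj), hjq⟩
        · obtain ⟨j, hj, hjq⟩ := hct q hq
          exact ⟨j, Finset.mem_insert_of_mem (Finset.mem_union_right _ hj), hjq⟩

theorem appears_of_memTree {X : Type*} [DecidableEq X] {m : ℕ} {S : Fin m → Finset X}
    (T : DTree X Lab) (hT : IsMemTree S T) (p : X → Bool) (hp : T.appears p) :
    ∃ i : Fin m, p = fun x => decide (x ∈ S i) := by
  induction T with
  | leaf _ => exact hp.elim
  | node q f t ihf iht =>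
      obtain ⟨hq, hf, ht⟩ := hT
      rcases hp with rfl | h | h
      · exact hq
      · exact ihf hf h
      · exact iht ht h

/-- Backward direction of the Set Cover reduction: if a membership decision tree labels
every element of `U` with `in` and the outside element `b` with `out`, then `U` is the
union of the sets `S i` whose membership predicate appears in the tree; consequently
there is a set cover of `U` of size at most the number of internal nodes of the tree. -/
theorem cover_of_memTree
    {X : Type*} [DecidableEq X] (m : ℕ) (U : Finset X) (S : Fin m → Finset X)
    (hS : ∀ i, S i ⊆ U) (b : X) (hb : b ∉ U) (T : DTree X Lab)
    (hT : IsMemTree S T)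
    (hU : ∀ e ∈ U, T.eval e = Lab.inn) (hbT : T.eval b = Lab.out) :
    (∀ x : X, x ∈ U ↔ ∃ i : Fin m, T.appears (fun x => decide (x ∈ S i)) ∧ x ∈ S i) ∧
    ∃ J : Finset (Fin m), J.card ≤ T.size ∧ J.biUnion S = U := by
  have key : ∀ x : X, x ∈ U ↔
      ∃ i : Fin m, T.appears (fun x => decide (x ∈ S i)) ∧ x ∈ S i := by
    intro x
    constructor
    · intro hx
      by_contra hcon
      push_neg at hcon
      have : T.eval x = T.eval b := by
        apply DTree.eval_eq_of_agree
        intro p hp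
        obtain ⟨i, rfl⟩ := appears_of_memTree T hT p hp
        have hxi : x ∉ S i := hcon i hp
        have hbi : b ∉ S i := fun h => hb (hS i h)
        simp [hxi, hbi]
      rw [hU x hx, hbT] at this
      exact Lab.noConfusion this
    · rintro ⟨i, _, hxi⟩
      exact hS i hxi
  refine ⟨key, ?_⟩
  obtain ⟨J, hJcard, hJcov⟩ := exists_cover_set S T hT
  refine ⟨J, hJcard, ?_⟩
  apply Finset.Subset.antisymm
  · intro x hx
    obtain ⟨i, hiJ, hxi⟩ := Finset.mem_biUnion.mp hx
    exact hS i hxi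
  · intro x hx
    obtain ⟨i, hap, hxi⟩ := (key x).mp hx
    obtain ⟨j, hjJ, hjq⟩ := hJcov _ hap
    have : decide (x ∈ S i) = decide (x ∈ S j) := congrFun hjq x
    simp only [decide_eq_decide] at this
    exact Finset.mem_biUnion.mpr ⟨j, hjJ, this.mp hxi⟩
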